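/- For every integer l ≥ 1, the inequality c(l,2) ≥ 24·(l−1)! / (5·(2l+4)!!) holds, where (2l+4)!! = 2·4·6···(2l+4) denotes the double factorial of the even number 2l+4. -/
import Mathlib


open scoped Classical

/-- The constants `c(l,k)`: `c(l,0) = c(0,k) = 0`,
`c(1,k) = (2k²+14k)/((k+1)(k+2)(k+3)(k+4))` for `k ≥ 1`, and for `l > 1`, `k > 0`,
`c(l,k) = c(l,k-1)·(l+k-1)/(2l+k+2) + c(l-1,k)·(l-1)/(2l+k+2)`. -/
noncomputable def c : ℕ → ℕ → ℝ
  | _, 0 => 0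
  | 0, _ => 0
  | 1, k + 1 =>
      (2 * ((k : ℝ) + 1) ^ 2 + 14 * ((k : ℝ) + 1)) /
        (((k : ℝ) + 2) * ((k : ℝ) + 3) * ((k : ℝ) + 4) * ((k : ℝ) + 5))
  | l + 2, k + 1 =>
      c (l + 2) k * ((l : ℝ) + (k : ℝ) + 2) / (2 * (l : ℝ) + (k : ℝ) + 7) +
      c (l + 1) (k + 1) * ((l : ℝ) + 1) / (2 * (l : ℝ) + (k : ℝ) + 7)
termination_by l k => (l, k)

lemma c_nonneg : ∀ l k, 0 ≤ c l k := by
  intro l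
  induction l with
  | zero => intro k; cases k <;> simp [c]
  | succ n ih =>
    intro k
    induction k with
    | zero => simp [c]
    | succ k ihk =>
      cases n with
      | zero =>
        show 0 ≤ c 1 (k + 1)
        rw [show c 1 (k + 1) = (2 * ((k : ℝ) + 1) ^ 2 + 14 * ((k : ℝ) + 1)) /
          (((k : ℝ) + 2) * ((k : ℝ) + 3) * ((k : ℝ) + 4) * ((k : ℝ) + 5)) from by simp [c]]
        positivity
      | succ m =>
        rw [show c (m + 2) (k + 1) = c (m + 2) k * ((m : ℝ) + (k : ℝ) + 2) / (2 * (m : ℝ) + (k : ℝ) + 7) +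
          c (m + 1) (k + 1) * ((m : ℝ) + 1) / (2 * (m : ℝ) + (k : ℝ) + 7) from by simp [c]]
        have h1 := ih (k + 1)
        have h2 := ihk
        positivity


/-- For every integer `l ≥ 1`, `c(l,2) ≥ 24·(l−1)!/(5·(2l+4)‼)`, where `‼` is the
double factorial. -/
theorem c_l_two_lower_bound :
    ∀ l : ℕ, 1 ≤ l →
      24 * ((l - 1).factorial : ℝ) / (5 * (Nat.doubleFactorial (2 * l + 4) : ℝ)) ≤
        c l 2 := by
  intro l hl
  induction l with
  | zero => omega
  | succ n ih =>
    cases n with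
    | zero =>
      show _ ≤ c 1 2
      norm_num [c, Nat.doubleFactorial]
    | succ m =>
      have ih' := ih (by omega)
      have hrec : c (m + 2) 2 = c (m + 2) 1 * ((m : ℝ) + 1 + 2) / (2 * (m : ℝ) + 1 + 7) +
          c (m + 1) 2 * ((m : ℝ) + 1) / (2 * (m : ℝ) + 1 + 7) := by
        simp [c]
      have hc1 : 0 ≤ c (m + 2) 1 := c_nonneg _ _
      have hD : (0 : ℝ) < (Nat.doubleFactorial (2 * (m + 1) + 4) : ℝ) := by
        exact_mod_cast Nat.doubleFactorial_pos _
      have hdf : (Nat.doubleFactorial (2 * (m + 2) + 4) : ℝ)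
          = (2 * (m : ℝ) + 8) * (Nat.doubleFactorial (2 * (m + 1) + 4) : ℝ) := by
        rw [show 2 * (m + 2) + 4 = (2 * (m + 1) + 4) + 2 by ring, Nat.doubleFactorial_add_two]
        push_cast; ring
      have hfact : ((m + 2 - 1).factorial : ℝ) = ((m : ℝ) + 1) * ((m + 1 - 1).factorial : ℝ) := by
        push_cast [show m + 2 - 1 = m + 1 from rfl, show m + 1 - 1 = m from rfl,
          Nat.factorial_succ]; ring
      rw [hrec, hdf, hfact]
      set A : ℝ := ((m + 1 - 1).factorial : ℝ)
      set D : ℝ := (Nat.doubleFactorial (2 * (m + 1) + 4) : ℝ)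
      have hA : 0 ≤ A := by positivity
      have key : 24 * (((m : ℝ) + 1) * A) / (5 * ((2 * (m : ℝ) + 8) * D))
          = (24 * A / (5 * D)) * (((m : ℝ) + 1) / (2 * (m : ℝ) + 1 + 7)) := by
        field_simp; ring
      rw [key]
      have step : (24 * A / (5 * D)) * (((m : ℝ) + 1) / (2 * (m : ℝ) + 1 + 7))
          ≤ c (m + 1) 2 * (((m : ℝ) + 1) / (2 * (m : ℝ) + 1 + 7)) := by
        gcongr
      refine step.trans ?_
      have h2 : c (m + 1) 2 * (((m : ℝ) + 1) / (2 * (m : ℝ) + 1 + 7))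
          = c (m + 1) 2 * ((m : ℝ) + 1) / (2 * (m : ℝ) + 1 + 7) := by ring
      rw [h2]
      have hpos : 0 ≤ c (m + 2) 1 * ((m : ℝ) + 1 + 2) / (2 * (m : ℝ) + 1 + 7) := by positivity
      linarith
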